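/- Let (A,B) be structurally controllable with all state vertices input-reachable in D(A,B). Augment D(A,B) with a virtual source ū and unit-capacity edges; edges of D(A,B) get capacity 1 and the edge (ū, u_i) gets capacity equal to the out-degree of u_i. Then the minimum number of edges of D(A,B) whose deletion destroys input-reachability of some state vertex equals min over state vertices x_i of the minimum ū–x_i edge cut in the augmented digraph. -/

import Mathlib

/-- Adjacency of the system digraph `D(A,B)`. -/
def sysAdj {n q : ℕ} (EA : Finset (Fin n × Fin n)) (EB : Finset (Fin q × Fin n)) :
    (Fin q ⊕ Fin n) → (Fin q ⊕ Fin n) → Prop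
  | Sum.inl u, Sum.inr x => (u, x) ∈ EB
  | Sum.inr x, Sum.inr y => (x, y) ∈ EA
  | _, _ => False

/-- Every state vertex is reachable from some input vertex in `D(A,B)`. -/
def InputReachable {n q : ℕ} (EA : Finset (Fin n × Fin n))
    (EB : Finset (Fin q × Fin n)) : Prop :=
  ∀ x : Fin n, ∃ u : Fin q,
    Relation.ReflTransGen (sysAdj EA EB) (Sum.inl u) (Sum.inr x)

/-- The augmented digraph `D(A,B,ū)`, where the virtual source `ū` is `none`
and has an edge to every input vertex. -/
def augEdges {n q : ℕ} (EA : Finset (Fin n × Fin n)) (EB : Finset (Fin q × Fin n)) :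
    Finset (Option (Fin q ⊕ Fin n) × Option (Fin q ⊕ Fin n)) :=
  (EB.image fun e => ((some (Sum.inl e.1) : Option (Fin q ⊕ Fin n)), some (Sum.inr e.2)))
    ∪ (EA.image fun e => ((some (Sum.inr e.1) : Option (Fin q ⊕ Fin n)), some (Sum.inr e.2)))
    ∪ (Finset.univ.image fun u : Fin q => ((none : Option (Fin q ⊕ Fin n)), some (Sum.inl u)))

/-- Capacities on the augmented digraph: every original edge has capacity `1`,
and the edge `(ū, u_i)` has capacity equal to the out-degree of `u_i`. -/
def augCap {n q : ℕ} (EB : Finset (Fin q × Fin n)) :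
    Option (Fin q ⊕ Fin n) × Option (Fin q ⊕ Fin n) → ℕ
  | (none, some (Sum.inl u)) => (EB.filter fun p => p.1 = u).card
  | _ => 1

/-!
A `ū`–`x` cut in the augmented digraph and a set of edges of `D(A,B)` whose deletion disconnects
`x` from every input translate into each other at no extra cost. Edges of `D(A,B)` have capacity
`1`, so such a deletion set is itself an augmented cut of the same capacity. Conversely, replace
every cut source edge `(ū, u)` of an augmented cut by all out-edges of `u`: this costs exactly the
capacity of `(ū, u)`, and `x` stays disconnected because a surviving input–`x` path would start
with an out-edge of an input whose source edge survives. So the two minima agree for each `x`.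
-/

open Finset Relation Sum

theorem Nat.sInf_eq_sInf_setOf_sInf {ι : Type*} {S : Set ℕ} {T : ι → Set ℕ}
    (hT : ∀ i, (T i).Nonempty) (hST : ∀ k ∈ S, ∃ i, ∃ v ∈ T i, v ≤ k)
    (hTS : ∀ i, ∀ v ∈ T i, ∃ k ∈ S, k ≤ v) :
    sInf S = sInf {k | ∃ i, k = sInf (T i)} := by
  rcases S.eq_empty_or_nonempty with rfl | hS
  · have : IsEmpty ι := ⟨fun i => by simpa using hTS i _ (Nat.sInf_mem (hT i))⟩
    simp
  · obtain ⟨i, v, hv, hvk⟩ := hST _ (Nat.sInf_mem hS)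
    refine le_antisymm (le_csInf ⟨_, i, rfl⟩ ?_) ?_
    · rintro _ ⟨j, rfl⟩
      obtain ⟨k, hk, hkv⟩ := hTS j _ (Nat.sInf_mem (hT j))
      exact (Nat.sInf_le hk).trans hkv
    · calc sInf {k | ∃ i, k = sInf (T i)} ≤ sInf (T i) := Nat.sInf_le ⟨i, rfl⟩
        _ ≤ sInf S := (Nat.sInf_le hv).trans hvk

theorem Relation.reflTransGen_some_iff {α : Type*} {r : Option α → Option α → Prop}
    (hr : ∀ a, ¬ r a none) {a b : α} :
    ReflTransGen r (some a) (some b) ↔ ReflTransGen (fun a b => r (some a) (some b)) a b := by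
  refine ⟨fun h => ?_, fun h => h.lift some fun _ _ => id⟩
  suffices ∀ c, ReflTransGen r (some a) c →
      ∃ b, c = some b ∧ ReflTransGen (fun a b => r (some a) (some b)) a b by
    obtain ⟨b', hb', hab'⟩ := this _ h
    exact Option.some_injective _ hb' ▸ hab'
  intro c hc
  induction hc with
  | refl => exact ⟨a, rfl, .refl⟩
  | @tail c d _ hcd ih =>
    obtain ⟨b, rfl, hab⟩ := ih
    cases d with
    | none => exact absurd hcd (hr _)
    | some d => exact ⟨d, rfl, hab.tail hcd⟩

section AugmentedDigraph

abbrev AugEdge (q n : ℕ) : Type := Option (Fin q ⊕ Fin n) × Option (Fin q ⊕ Fin n)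

variable {n q : ℕ} {EA : Finset (Fin n × Fin n)} {EB : Finset (Fin q × Fin n)}

theorem sysAdj_mono {EA' : Finset (Fin n × Fin n)} {EB' : Finset (Fin q × Fin n)}
    (hA : EA ⊆ EA') (hB : EB ⊆ EB') : sysAdj EA EB ≤ sysAdj EA' EB' := by
  rintro (u | x) (v | y) h
  exacts [h.elim, hB h, h.elim, hA h]

theorem exists_mem_of_reflTransGen_sysAdj {u : Fin q} {x : Fin n}
    (h : ReflTransGen (sysAdj EA EB) (inl u) (inr x)) : ∃ y, (u, y) ∈ EB := by
  rcases h.cases_head with h | ⟨v | y, huv, -⟩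
  · exact nomatch h
  · exact (huv : False).elim
  · exact ⟨y, huv⟩

def inputEdge (e : Fin q × Fin n) : AugEdge q n :=
  (some (inl e.1), some (inr e.2))

def stateEdge (e : Fin n × Fin n) : AugEdge q n :=
  (some (inr e.1), some (inr e.2))

def sourceEdge (u : Fin q) : AugEdge q n :=
  (none, some (inl u))

theorem sourceEdge_mem_augEdges (u : Fin q) : sourceEdge u ∈ augEdges EA EB := by
  simp [augEdges, sourceEdge]

theorem image_inputEdge_subset_augEdges : EB.image inputEdge ⊆ augEdges EA EB :=
  subset_union_left.trans subset_union_left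

theorem image_stateEdge_subset_augEdges : EA.image stateEdge ⊆ augEdges EA EB :=
  subset_union_right.trans subset_union_left

theorem some_some_mem_augEdges_sdiff_iff (F : Finset (AugEdge q n))
    (a b : Fin q ⊕ Fin n) :
    (some a, some b) ∈ augEdges EA EB \ F ↔
      sysAdj (EA.filter (stateEdge · ∉ F)) (EB.filter (inputEdge · ∉ F)) a b := by
  cases a <;> cases b <;> simp [sysAdj, augEdges] <;> simp [inputEdge, stateEdge]

theorem mk_none_notMem_augEdges_sdiff (F : Finset (AugEdge q n))
    (a : Option (Fin q ⊕ Fin n)) : (a, none) ∉ augEdges EA EB \ F := by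
  simp [augEdges]

theorem reflTransGen_augEdges_sdiff_iff
    (F : Finset (AugEdge q n)) (x : Fin n) :
    ReflTransGen (fun a b => (a, b) ∈ augEdges EA EB \ F) none (some (inr x)) ↔
      ∃ u, sourceEdge u ∉ F ∧
        ReflTransGen (sysAdj (EA.filter (stateEdge · ∉ F)) (EB.filter (inputEdge · ∉ F)))
          (inl u) (inr x) := by
  have hsome : (fun a b => (some a, some b) ∈ augEdges EA EB \ F) =
      sysAdj (EA.filter (stateEdge · ∉ F)) (EB.filter (inputEdge · ∉ F)) := by
    ext a b
    exact some_some_mem_augEdges_sdiff_iff F a b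
  rw [← hsome]
  constructor
  · intro h
    obtain ⟨c, hc, hcx⟩ := (h.cases_head).resolve_left (nomatch ·)
    obtain ⟨u, rfl⟩ : ∃ u, c = some (inl u) := by
      simp only [augEdges, mem_sdiff, mem_union, mem_image] at hc
      grind
    refine ⟨u, (mem_sdiff.1 hc).2, ?_⟩
    exact (reflTransGen_some_iff (mk_none_notMem_augEdges_sdiff F)).1 hcx
  · rintro ⟨u, hu, hux⟩
    exact .head (mem_sdiff.2 ⟨sourceEdge_mem_augEdges u, hu⟩)
      ((reflTransGen_some_iff (mk_none_notMem_augEdges_sdiff F)).2 hux)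

theorem sum_augCap_image_inputEdge (FB : Finset (Fin q × Fin n)) :
    ∑ e ∈ FB.image inputEdge, augCap EB e = FB.card := by
  rw [sum_image fun a _ b _ h => by simpa [inputEdge, Prod.ext_iff] using h]
  exact (card_eq_sum_ones FB).symm

theorem sum_augCap_image_stateEdge (FA : Finset (Fin n × Fin n)) :
    ∑ e ∈ FA.image stateEdge, augCap EB e = FA.card := by
  rw [sum_image fun a _ b _ h => by simpa [stateEdge, Prod.ext_iff] using h]
  exact (card_eq_sum_ones FA).symm

theorem sum_augCap_image_sourceEdge (P : Fin q → Prop) [DecidablePred P] :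
    ∑ e ∈ (univ.filter P).image sourceEdge, augCap EB e = (EB.filter (P ·.1)).card := by
  rw [sum_image fun a _ b _ h => by simpa [sourceEdge] using h,
    card_eq_sum_card_fiberwise (f := Prod.fst) (t := univ.filter P) fun e he => by simp_all]
  refine sum_congr rfl fun u hu => ?_
  rw [filter_filter]
  refine congrArg card (filter_congr fun e _ => ?_)
  simp_all

theorem disjoint_image_inputEdge_image_stateEdge (FB : Finset (Fin q × Fin n))
    (FA : Finset (Fin n × Fin n)) : Disjoint (FB.image inputEdge) (FA.image stateEdge) := by
  simp only [disjoint_left, mem_image, not_exists, not_and]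
  rintro _ ⟨a, -, rfl⟩ b - h
  simp [inputEdge, stateEdge] at h

theorem disjoint_image_union_image_sourceEdge (FB : Finset (Fin q × Fin n))
    (FA : Finset (Fin n × Fin n)) (S : Finset (Fin q)) :
    Disjoint (FB.image inputEdge ∪ FA.image stateEdge) (S.image sourceEdge) := by
  simp only [disjoint_left, mem_union, mem_image, not_exists, not_and]
  rintro _ (⟨a, -, rfl⟩ | ⟨a, -, rfl⟩) u - h <;> simp [inputEdge, stateEdge, sourceEdge] at h

theorem exists_augCut_of_sysCut {FA : Finset (Fin n × Fin n)} {FB : Finset (Fin q × Fin n)}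
    (hFA : FA ⊆ EA) (hFB : FB ⊆ EB) {x : Fin n}
    (hx : ∀ u, ¬ ReflTransGen (sysAdj (EA \ FA) (EB \ FB)) (inl u) (inr x)) :
    ∃ F ⊆ augEdges EA EB,
      ¬ ReflTransGen (fun a b => (a, b) ∈ augEdges EA EB \ F) none (some (inr x)) ∧
      ∑ e ∈ F, augCap EB e = FA.card + FB.card := by
  set F := FB.image inputEdge ∪ FA.image stateEdge
  refine ⟨F, union_subset ((image_subset_image hFB).trans image_inputEdge_subset_augEdges)
    ((image_subset_image hFA).trans image_stateEdge_subset_augEdges), ?_, ?_⟩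
  · rw [reflTransGen_augEdges_sdiff_iff]
    rintro ⟨u, -, hux⟩
    refine hx u (ReflTransGen.mono (sysAdj_mono (fun e he => ?_) (fun e he => ?_)) _ _ hux)
    · rw [mem_filter] at he
      exact mem_sdiff.2 ⟨he.1, fun h => he.2 (mem_union_right _ (mem_image_of_mem _ h))⟩
    · rw [mem_filter] at he
      exact mem_sdiff.2 ⟨he.1, fun h => he.2 (mem_union_left _ (mem_image_of_mem _ h))⟩
  · rw [sum_union (disjoint_image_inputEdge_image_stateEdge FB FA), sum_augCap_image_inputEdge,
      sum_augCap_image_stateEdge, add_comm]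

theorem exists_sysCut_of_augCut (F : Finset (AugEdge q n))
    {x : Fin n} (hF : ¬ ReflTransGen (fun a b => (a, b) ∈ augEdges EA EB \ F) none (some (inr x))) :
    ∃ FA ⊆ EA, ∃ FB ⊆ EB,
      (∀ u, ¬ ReflTransGen (sysAdj (EA \ FA) (EB \ FB)) (inl u) (inr x)) ∧
      FA.card + FB.card ≤ ∑ e ∈ F, augCap EB e := by
  set FA := EA.filter (stateEdge · ∈ F)
  set FB₁ := EB.filter (inputEdge · ∈ F)
  set FB₂ := EB.filter (sourceEdge ·.1 ∈ F)
  set S := univ.filter (sourceEdge · ∈ F)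
  refine ⟨FA, filter_subset _ _, FB₁ ∪ FB₂, union_subset (filter_subset _ _) (filter_subset _ _),
    fun u hux => hF ?_, ?_⟩
  · obtain ⟨y, hy⟩ := exists_mem_of_reflTransGen_sysAdj hux
    have hu : sourceEdge u ∉ F := fun hu =>
      (mem_sdiff.1 hy).2 (mem_union_right _ (mem_filter.2 ⟨(mem_sdiff.1 hy).1, hu⟩))
    rw [reflTransGen_augEdges_sdiff_iff]
    refine ⟨u, hu, ReflTransGen.mono (sysAdj_mono (fun e he => ?_) (fun e he => ?_)) _ _ hux⟩
    · rw [mem_sdiff] at he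
      exact mem_filter.2 ⟨he.1, fun h => he.2 (mem_filter.2 ⟨he.1, h⟩)⟩
    · rw [mem_sdiff] at he
      exact mem_filter.2 ⟨he.1, fun h => he.2 (mem_union_left _ (mem_filter.2 ⟨he.1, h⟩))⟩
  · calc FA.card + (FB₁ ∪ FB₂).card ≤ FB₁.card + FA.card + FB₂.card := by
          have := card_union_le FB₁ FB₂; omega
      _ = ∑ e ∈ FB₁.image inputEdge ∪ FA.image stateEdge ∪ S.image sourceEdge, augCap EB e := by
          rw [sum_union (disjoint_image_union_image_sourceEdge _ _ _),
            sum_union (disjoint_image_inputEdge_image_stateEdge _ _), sum_augCap_image_inputEdge,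
            sum_augCap_image_stateEdge, sum_augCap_image_sourceEdge]
      _ ≤ ∑ e ∈ F, augCap EB e := by
          refine sum_le_sum_of_subset (union_subset (union_subset ?_ ?_) ?_) <;>
            simp [image_subset_iff, FA, FB₁, S]

end AugmentedDigraph

theorem stmt5_general {n q : ℕ} (EA : Finset (Fin n × Fin n)) (EB : Finset (Fin q × Fin n)) :
    sInf {k : ℕ | ∃ FA ⊆ EA, ∃ FB ⊆ EB,
        ¬ InputReachable (EA \ FA) (EB \ FB) ∧ k = FA.card + FB.card}
      = sInf {k : ℕ | ∃ x : Fin n,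
          k = sInf {v : ℕ | ∃ F ⊆ augEdges EA EB,
            (¬ Relation.ReflTransGen
                (fun a b => (a, b) ∈ augEdges EA EB \ F)
                none (some (Sum.inr x))) ∧
            v = ∑ e ∈ F, augCap EB e}} := by
  refine Nat.sInf_eq_sInf_setOf_sInf (fun x => ⟨_, augEdges EA EB, subset_rfl, ?_, rfl⟩) ?_ ?_
  · rw [reflTransGen_augEdges_sdiff_iff]
    exact fun ⟨u, hu, _⟩ => hu (sourceEdge_mem_augEdges u)
  · rintro _ ⟨FA, hFA, FB, hFB, hcut, rfl⟩
    simp only [InputReachable, not_forall, not_exists] at hcut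
    obtain ⟨x, hx⟩ := hcut
    obtain ⟨F, hF, hFx, hcap⟩ := exists_augCut_of_sysCut hFA hFB hx
    exact ⟨x, _, ⟨F, hF, hFx, rfl⟩, hcap.le⟩
  · rintro x _ ⟨F, -, hFx, rfl⟩
    obtain ⟨FA, hFA, FB, hFB, hx, hcap⟩ := exists_sysCut_of_augCut F hFx
    exact ⟨_, ⟨FA, hFA, FB, hFB, fun h => (h x).elim hx, rfl⟩, hcap⟩

/-- The minimum number of edges of `D(A,B)` whose deletion destroys
input-reachability of some state vertex equals the minimum over state
vertices `x` of the minimum capacity of a `ū`–`x` edge cut in the augmented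
digraph. -/
theorem stmt5 {n q : ℕ} (EA : Finset (Fin n × Fin n)) (EB : Finset (Fin q × Fin n))
    (hreach : InputReachable EA EB) :
    sInf {k : ℕ | ∃ FA ⊆ EA, ∃ FB ⊆ EB,
        ¬ InputReachable (EA \ FA) (EB \ FB) ∧ k = FA.card + FB.card}
      = sInf {k : ℕ | ∃ x : Fin n,
          k = sInf {v : ℕ | ∃ F ⊆ augEdges EA EB,
            (¬ Relation.ReflTransGen
                (fun a b => (a, b) ∈ augEdges EA EB \ F)
                none (some (Sum.inr x))) ∧
            v = ∑ e ∈ F, augCap EB e}} :=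
  stmt5_general EA EB
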